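/- arXiv:2010.09720 — 2 statements merged into one kernel-verified Lean document; each statement's English description precedes it below -/
import Mathlib

section
/- For all a, b, t ∈ ℝ: there exists α ∈ ℝ with Z·R_Z(b)·R_Y(t)·R_Z(a) = e^{iα}·I₂ if and only if there exist integers u, v with t = π·u and a + b = π·(1/2 + v). -/
open Matrix
open scoped Kronecker

noncomputable def PX : Matrix (Fin 2) (Fin 2) ℂ := !![0, 1; 1, 0]
noncomputable def PY : Matrix (Fin 2) (Fin 2) ℂ := !![0, -Complex.I; Complex.I, 0]
noncomputable def PZ : Matrix (Fin 2) (Fin 2) ℂ := !![1, 0; 0, -1]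
noncomputable def RX (θ : ℝ) : Matrix (Fin 2) (Fin 2) ℂ :=
  !![(Real.cos θ : ℂ), -Complex.I * (Real.sin θ : ℂ); -Complex.I * (Real.sin θ : ℂ), (Real.cos θ : ℂ)]
noncomputable def RY (θ : ℝ) : Matrix (Fin 2) (Fin 2) ℂ :=
  !![(Real.cos θ : ℂ), -(Real.sin θ : ℂ); (Real.sin θ : ℂ), (Real.cos θ : ℂ)]
noncomputable def RZ (θ : ℝ) : Matrix (Fin 2) (Fin 2) ℂ :=
  !![Complex.exp (-Complex.I * (θ : ℂ)), 0; 0, Complex.exp (Complex.I * (θ : ℂ))]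
noncomputable def P0 : Matrix (Fin 2) (Fin 2) ℂ := !![1, 0; 0, 0]
noncomputable def P1 : Matrix (Fin 2) (Fin 2) ℂ := !![0, 0; 0, 1]
noncomputable def CRY (θ : ℝ) : Matrix (Fin 2 × Fin 2) (Fin 2 × Fin 2) ℂ :=
  P0 ⊗ₖ (1 : Matrix (Fin 2) (Fin 2) ℂ) + P1 ⊗ₖ RY θ
noncomputable def CNOT : Matrix (Fin 2 × Fin 2) (Fin 2 × Fin 2) ℂ :=
  P0 ⊗ₖ (1 : Matrix (Fin 2) (Fin 2) ℂ) + P1 ⊗ₖ PX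

/-!
Multiplying out, `Z·R_Z(b)·R_Y(t)·R_Z(a)` has off-diagonal entries that are unit multiples of
`sin t` and diagonal entries `e^{-i(a+b)} cos t` and `-e^{i(a+b)} cos t`. So it is scalar iff
`sin t = 0`, in which case `cos t = ±1` and the diagonal entries agree iff
`e^{-i(a+b)} + e^{i(a+b)} = 2 cos (a + b)` vanishes; the common entry then has modulus one.
-/

open Complex

theorem Matrix.fin_two_eq_smul_one_iff {R : Type*} [Semiring R] {p q r s c : R} :
    !![p, q; r, s] = c • (1 : Matrix (Fin 2) (Fin 2) R) ↔ p = c ∧ q = 0 ∧ r = 0 ∧ s = c := by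
  rw [one_fin_two, smul_of, ← Matrix.ext_iff]
  simp [Fin.forall_fin_two, and_assoc]

theorem Real.sin_eq_zero_iff_exists_eq_pi_mul {x : ℝ} :
    Real.sin x = 0 ↔ ∃ u : ℤ, x = Real.pi * u := by
  rw [Real.sin_eq_zero_iff]
  exact exists_congr fun u ↦ by rw [mul_comm, eq_comm]

theorem Real.cos_eq_zero_iff_exists_eq_pi_mul {x : ℝ} :
    Real.cos x = 0 ↔ ∃ v : ℤ, x = Real.pi * (1 / 2 + v) := by
  rw [Real.cos_eq_zero_iff]
  exact exists_congr fun v ↦ by constructor <;> intro h <;> linarith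

theorem Complex.exp_neg_mul_I_eq_neg_exp_mul_I_iff (θ : ℝ) :
    exp (-θ * I) = -exp (θ * I) ↔ Real.cos θ = 0 := by
  rw [eq_neg_iff_add_eq_zero, add_comm, ← two_cos, ← ofReal_cos, mul_eq_zero, ofReal_eq_zero]
  simp

theorem PZ_mul_RZ_mul_RY_mul_RZ (a b t : ℝ) :
    PZ * RZ b * RY t * RZ a =
      !![exp (-↑(a + b) * I) * Real.cos t, -(exp (↑(a - b) * I) * Real.sin t);
        -(exp (-↑(a - b) * I) * Real.sin t), -(exp (↑(a + b) * I) * Real.cos t)] := by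
  ext i j
  fin_cases i <;> fin_cases j <;>
    simp [PZ, RZ, RY, add_mul, sub_mul, exp_add, exp_sub, exp_neg, mul_comm I] <;>
    ring

/-- `Z·R_Z(b)·R_Y(t)·R_Z(a)` is the identity up to a global phase iff
`t ∈ πℤ` and `a + b ∈ π(1/2 + ℤ)`. -/
theorem z_rz_ry_rz_eq_phase_id_iff (a b t : ℝ) :
    (∃ α : ℝ, PZ * RZ b * RY t * RZ a = Complex.exp (Complex.I * α) • (1 : Matrix (Fin 2) (Fin 2) ℂ)) ↔
      (∃ u : ℤ, t = Real.pi * u) ∧ (∃ v : ℤ, a + b = Real.pi * (1 / 2 + v)) := by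
  simp only [PZ_mul_RZ_mul_RY_mul_RZ, Matrix.fin_two_eq_smul_one_iff, neg_eq_zero, mul_eq_zero,
    exp_ne_zero, false_or, ofReal_eq_zero, ← Real.sin_eq_zero_iff_exists_eq_pi_mul,
    ← Real.cos_eq_zero_iff_exists_eq_pi_mul]
  constructor
  · rintro ⟨α, hdiag₀, hsin, -, hdiag₁⟩
    have hcos : Real.cos t ≠ 0 := by
      rcases Real.sin_eq_zero_iff_cos_eq.1 hsin with h | h <;> simp [h]
    refine ⟨hsin, (exp_neg_mul_I_eq_neg_exp_mul_I_iff _).1 ?_⟩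
    refine mul_right_cancel₀ (ofReal_ne_zero.2 hcos) ?_
    rw [hdiag₀, neg_mul, hdiag₁]
  · rintro ⟨hsin, hcos⟩
    have hnorm : ‖exp (-↑(a + b) * I) * Real.cos t‖ = 1 := by
      rw [norm_mul, ← ofReal_neg, norm_exp_ofReal_mul_I, norm_real, Real.norm_eq_abs, one_mul]
      exact Real.abs_cos_eq_one_iff.2 (Real.sin_eq_zero_iff.1 hsin)
    obtain ⟨α, hα⟩ := (norm_eq_one_iff _).1 hnorm
    refine ⟨α, by rw [mul_comm I, hα, mul_comm], hsin, hsin, ?_⟩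
    rw [mul_comm I, hα, ← neg_mul, ← (exp_neg_mul_I_eq_neg_exp_mul_I_iff _).2 hcos]
end

section
/- For every θ ∈ ℝ: there exist matrices A, B ∈ M₂(ℂ) with CR_Y(θ) = A ⊗ B if and only if there exists an integer w with θ = π·w. (Equivalently, the controlled-R_Y gate has Kronecker/operator rank 1 exactly when its angle is an integer multiple of π.) -/
/-!
The diagonal blocks of `P₀ ⊗ 1 + P₁ ⊗ U` are `1` and `U`, while those of `A ⊗ B` are `A₀₀ • B` and
`A₁₁ • B`. So a controlled gate is a Kronecker product exactly when `U` is a scalar matrix, and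
`R_Y(θ)` is scalar exactly when `sin θ = 0`.
-/

open Matrix
open scoped Kronecker

noncomputable def controlledGate {n : Type*} [DecidableEq n] (U : Matrix n n ℂ) :
    Matrix (Fin 2 × n) (Fin 2 × n) ℂ :=
  P0 ⊗ₖ (1 : Matrix n n ℂ) + P1 ⊗ₖ U

theorem submatrix_kronecker_prodMk {α l m n p : Type*} [Mul α] (A : Matrix l m α)
    (B : Matrix n p α) (i : l) (k : m) :
    (A ⊗ₖ B).submatrix (Prod.mk i) (Prod.mk k) = A i k • B :=
  rfl

section controlledGate

variable {n : Type*} [DecidableEq n] (U : Matrix n n ℂ)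

theorem submatrix_controlledGate_zero :
    (controlledGate U).submatrix (Prod.mk 0) (Prod.mk 0) = 1 := by
  ext j l
  simp [controlledGate, P0, P1]

theorem submatrix_controlledGate_one :
    (controlledGate U).submatrix (Prod.mk 1) (Prod.mk 1) = U := by
  ext j l
  simp [controlledGate, P0, P1]

theorem controlledGate_smul_one (c : ℂ) :
    controlledGate (c • 1 : Matrix n n ℂ) = (P0 + c • P1) ⊗ₖ (1 : Matrix n n ℂ) := by
  rw [controlledGate, add_kronecker, smul_kronecker, kronecker_smul]

theorem exists_controlledGate_eq_kronecker_iff :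
    (∃ A : Matrix (Fin 2) (Fin 2) ℂ, ∃ B : Matrix n n ℂ, controlledGate U = A ⊗ₖ B) ↔
      ∃ c : ℂ, U = c • 1 := by
  constructor
  · rintro ⟨A, B, h⟩
    have hB : A 0 0 • B = 1 := by
      rw [← submatrix_kronecker_prodMk, ← h, submatrix_controlledGate_zero]
    have hU : A 1 1 • B = U := by
      rw [← submatrix_kronecker_prodMk, ← h, submatrix_controlledGate_one]
    refine ⟨A 1 1 / A 0 0, ?_⟩
    by_cases hA : A 0 0 = 0
    · have h10 : (1 : Matrix n n ℂ) = 0 := by rw [← hB, hA, zero_smul]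
      ext j
      simpa using congrFun₂ h10 j j
    · rw [← hU, ← hB, smul_smul, div_mul_cancel₀ _ hA]
  · rintro ⟨c, rfl⟩
    exact ⟨_, _, controlledGate_smul_one c⟩

end controlledGate

theorem CRY_eq_controlledGate (θ : ℝ) : CRY θ = controlledGate (RY θ) :=
  rfl

theorem RY_eq_smul_one_iff (θ : ℝ) : (∃ c : ℂ, RY θ = c • 1) ↔ Real.sin θ = 0 := by
  constructor
  · rintro ⟨c, h⟩
    exact_mod_cast (by simpa [RY] using congrFun₂ h 1 0 : Complex.sin θ = 0)
  · intro h
    refine ⟨Real.cos θ, ?_⟩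
    ext i j
    fin_cases i <;> fin_cases j <;> simp [RY, h]

/-- `CR_Y(θ)` is a Kronecker product of two single-qubit matrices iff
`θ` is an integer multiple of `π`. -/
theorem cry_kronecker_rank_one_iff (θ : ℝ) :
    (∃ A B : Matrix (Fin 2) (Fin 2) ℂ, CRY θ = A ⊗ₖ B) ↔ (∃ w : ℤ, θ = Real.pi * w) := by
  rw [CRY_eq_controlledGate, exists_controlledGate_eq_kronecker_iff, RY_eq_smul_one_iff, Real.sin_eq_zero_iff]
  simp only [eq_comm, mul_comm]
end
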